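/- In ℂ⁶, let {e_k}_{k=0}^{5} be the standard basis, set e^0_j = e_j for j = 0,…,5, and for each a = 1,…,7 define e^a_j = (1/√6) ∑_{k=0}^{5} exp(2πi·jk/6)·exp(2πi·a·3^k/7) e_k. Then: (i) for each a = 0,…,7, the set {e^a_j}_{j=0}^{5} is an orthonormal basis of ℂ⁶; and (ii) with weights w_0 = 1/42 and w_a = 1/49 for a = 1,…,7, the union of these 8 bases forms a weighted 2-design: ∑_{a,b=0}^{7} w_a w_b ∑_{j,k=0}^{5} |⟨e^a_j, e^b_k⟩|^4 = 1/21. -/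

import Mathlib

open Complex

/-- The 8 bases of `ℂ⁶`: the standard basis (`a = 0`) together with the 7 bases
`e^a_j = (1/√6) ∑_k exp(2πi·jk/6)·exp(2πi·a·3^k/7) e_k` for `a = 1, …, 7`. -/
noncomputable def dim6Basis : Fin 8 → Fin 6 → EuclideanSpace ℂ (Fin 6) := fun a j =>
  if a = 0 then EuclideanSpace.single j 1
  else
    (WithLp.equiv 2 (Fin 6 → ℂ)).symm fun k =>
      ((Real.sqrt 6 : ℂ))⁻¹ *
        Complex.exp (2 * Real.pi * Complex.I * (j : ℕ) * (k : ℕ) / 6) *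
        Complex.exp (2 * Real.pi * Complex.I * (a : ℕ) * ((3 : ℕ) ^ (k : ℕ) : ℕ) / 7)

/-- The weights: `1/42` for the standard basis, `1/49` for each of the other 7 bases. -/
noncomputable def dim6Weight : Fin 8 → ℝ := fun a => if a = 0 then 1 / 42 else 1 / 49

/-!
For `a, b ≠ 0` the inner product `⟪e^a_j, e^b_k⟫` is `6⁻¹ ∑_l ψ₆((k - j) l) ψ₇((b - a) 3^l)`,
where `ψₙ x = exp (2πi x / n)`. Since `3` generates `(ZMod 7)ˣ`, the factor `l ↦ ψ₆(m l)` is a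
multiplicative character of `ZMod 7` read through the discrete logarithm to base `3`, so this sum
is a Gauss sum: of absolute value `√7` when `j ≠ k` and `a ≠ b`, equal to `-1` when `j = k` and
`a ≠ b`, and the orthogonality relation of `ψ₆` when `a = b`. The standard basis is unbiased with
respect to all the others, and the Welch sum becomes a count of these values.
-/

local notation "ψ₆" => (ZMod.stdAddChar : AddChar (ZMod 6) ℂ)
local notation "ψ₇" => (ZMod.stdAddChar : AddChar (ZMod 7) ℂ)

instance fact_prime_seven : Fact (Nat.Prime 7) := ⟨by norm_num⟩

lemma stdAddChar_natCast {N : ℕ} [NeZero N] (n : ℕ) :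
    ZMod.stdAddChar (n : ZMod N) = cexp (2 * Real.pi * I * n / N) :=
  ZMod.toCircle_natCast n

lemma sum_fin_natCast_eq_sum_zmod {M : Type*} [AddCommMonoid M] (n : ℕ)
    (f : ZMod (n + 1) → M) : ∑ l : Fin (n + 1), f (l : ℕ) = ∑ x : ZMod (n + 1), f x :=
  Finset.sum_congr rfl fun l _ => congrArg f (ZMod.natCast_zmod_val (n := n + 1) l)

lemma norm_inner_sq_of_orthonormal {𝕜 ι E : Type*} [RCLike 𝕜] [DecidableEq ι]
    [NormedAddCommGroup E] [InnerProductSpace 𝕜 E] {v : ι → E} (hv : Orthonormal 𝕜 v) (j k : ι) :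
    ‖inner 𝕜 (v j) (v k)‖ ^ 2 = if j = k then 1 else 0 := by
  rw [orthonormal_iff_ite.1 hv j k]
  split_ifs <;> simp

lemma sum_sum_pow_four_of_sq_eq_ite {ι : Type*} [Fintype ι] [DecidableEq ι] (x : ι → ι → ℝ)
    (p q : ℝ) (hx : ∀ j k, x j k ^ 2 = if j = k then p else q) :
    ∑ j, ∑ k, x j k ^ 4 = Fintype.card ι * (p ^ 2 + (Fintype.card ι - 1) * q ^ 2) := by
  have hx4 : ∀ j k, x j k ^ 4 = if j = k then p ^ 2 else q ^ 2 := fun j k => by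
    rw [show x j k ^ 4 = (x j k ^ 2) ^ 2 by ring, hx, ite_pow]
  simp only [hx4, Finset.sum_ite, Finset.filter_eq, Finset.filter_ne, Finset.mem_univ, if_true,
    Finset.card_singleton, Finset.sum_const, Finset.card_erase_of_mem, Finset.card_univ,
    nsmul_eq_mul, Nat.cast_one, one_mul]
  rcases (Fintype.card ι).eq_zero_or_pos with h | h
  · simp [h]
  · rw [Nat.cast_sub h]
    ring

def unitThree : (ZMod 7)ˣ := ZMod.unitOfCoprime 3 (by norm_num)

lemma coe_unitThree : (unitThree : ZMod 7) = 3 := rfl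

lemma mem_zpowers_unitThree (x : (ZMod 7)ˣ) : x ∈ Subgroup.zpowers unitThree := by
  obtain ⟨k, hk⟩ : ∃ k : Fin 6, (3 : ZMod 7) ^ (k : ℕ) = x := by
    have : ∀ y : ZMod 7, y ≠ 0 → ∃ k : Fin 6, (3 : ZMod 7) ^ (k : ℕ) = y := by decide
    exact this x x.ne_zero
  exact ⟨k, Units.ext (by simpa [coe_unitThree] using hk)⟩

lemma sum_three_pow_eq_sum_erase_zero {M : Type*} [AddCommMonoid M] (f : ZMod 7 → M) :
    ∑ l : Fin 6, f (3 ^ (l : ℕ)) = ∑ x ∈ Finset.univ.erase 0, f x := by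
  have himage :
      Finset.univ.image (fun l : Fin 6 => (3 : ZMod 7) ^ (l : ℕ)) = Finset.univ.erase 0 := by
    decide
  rw [← himage, Finset.sum_image (by decide)]

lemma natCard_units_zmod_seven : Nat.card (ZMod 7)ˣ = 6 := by
  rw [Nat.card_eq_fintype_card, ZMod.card_units]

/-- `dlogChar m x = ψ₆ (m * log₃ x)`, with the discrete logarithm taken in `ZMod 6`. -/
noncomputable def dlogChar (m : ZMod 6) : MulChar (ZMod 7) ℂ :=
  MulChar.ofUnitHom <| (AddChar.mulShift ψ₆ m).toMonoidHom.toHomUnits.comp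
    (zmodMulEquivOfGenerator mem_zpowers_unitThree natCard_units_zmod_seven).symm.toMonoidHom

lemma dlogChar_three_pow (m : ZMod 6) (l : ℕ) : dlogChar m (3 ^ l) = ψ₆ (m * l) := by
  have h := zmodMulEquivOfGenerator_symm_apply_zpow mem_zpowers_unitThree
    natCard_units_zmod_seven l
  rw [zpow_natCast] at h
  rw [← coe_unitThree, ← Units.val_pow_eq_pow_val, dlogChar, MulChar.ofUnitHom_coe]
  simp [h]

lemma dlogChar_ne_one {m : ZMod 6} (hm : m ≠ 0) : dlogChar m ≠ 1 := by
  intro h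
  have h3 := dlogChar_three_pow m 1
  rw [pow_one, h, MulChar.one_apply (by decide), Nat.cast_one, mul_one,
    ← AddChar.map_zero_eq_one ψ₆, ZMod.injective_stdAddChar.eq_iff] at h3
  exact hm h3.symm

noncomputable def twistedSum (m : ZMod 6) (c : ZMod 7) : ℂ :=
  ∑ l : Fin 6, ψ₆ (m * (l : ℕ)) * ψ₇ (c * 3 ^ (l : ℕ))

lemma twistedSum_eq_gaussSum (m : ZMod 6) (c : ZMod 7) :
    twistedSum m c = gaussSum (dlogChar m) (AddChar.mulShift ψ₇ c) := by
  rw [gaussSum, ← Finset.sum_erase (a := 0) _ (by rw [MulChar.map_zero, zero_mul]),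
    ← sum_three_pow_eq_sum_erase_zero (fun x => dlogChar m x * AddChar.mulShift ψ₇ c x)]
  simp [twistedSum, dlogChar_three_pow, AddChar.mulShift_apply]

lemma norm_twistedSum_sq {m : ZMod 6} {c : ZMod 7} (hm : m ≠ 0) (hc : c ≠ 0) :
    ‖twistedSum m c‖ ^ 2 = 7 := by
  have hψ : (AddChar.mulShift ψ₇ c).IsPrimitive :=
    AddChar.IsPrimitive.of_ne_one (ZMod.isPrimitive_stdAddChar 7 hc)
  have h := gaussSum_mul_gaussSum_eq_card (dlogChar_ne_one hm) hψ
  rw [← star_gaussSum_eq, ← twistedSum_eq_gaussSum, ← starRingEnd_apply, mul_conj,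
    ← Complex.sq_norm, ZMod.card] at h
  exact_mod_cast h

lemma twistedSum_zero_left {c : ZMod 7} (hc : c ≠ 0) : twistedSum 0 c = -1 := by
  simp only [twistedSum, zero_mul, AddChar.map_zero_eq_one, one_mul]
  rw [sum_three_pow_eq_sum_erase_zero (fun x => ψ₇ (c * x)),
    Finset.sum_erase_eq_sub (Finset.mem_univ 0)]
  have h := AddChar.sum_mulShift c (ZMod.isPrimitive_stdAddChar 7)
  simp_rw [mul_comm _ c] at h
  simp [h, hc]

lemma twistedSum_zero_right (m : ZMod 6) : twistedSum m 0 = if m = 0 then 6 else 0 := by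
  simp only [twistedSum, zero_mul, AddChar.map_zero_eq_one, mul_one]
  rw [sum_fin_natCast_eq_sum_zmod 5 (fun x => ψ₆ (m * x))]
  simp_rw [mul_comm m]
  rw [AddChar.sum_mulShift m (ZMod.isPrimitive_stdAddChar 6)]
  simp

lemma natCast_sub_natCast_eq_zero_iff_fin_six (j k : Fin 6) :
    ((k : ℕ) - (j : ℕ) : ZMod 6) = 0 ↔ j = k := by
  revert j k; decide

lemma natCast_sub_natCast_eq_zero_iff_fin_eight {a b : Fin 8} (ha : a ≠ 0) (hb : b ≠ 0) :
    ((b : ℕ) - (a : ℕ) : ZMod 7) = 0 ↔ a = b := by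
  revert a b; decide

lemma dim6Basis_zero (j : Fin 6) : dim6Basis 0 j = EuclideanSpace.single j 1 := by
  simp [dim6Basis]

lemma dim6Basis_apply {a : Fin 8} (ha : a ≠ 0) (j k : Fin 6) :
    dim6Basis a j k =
      ((Real.sqrt 6 : ℝ) : ℂ)⁻¹ * ψ₆ ((j : ℕ) * (k : ℕ)) * ψ₇ ((a : ℕ) * 3 ^ (k : ℕ)) := by
  have h6 : ((j : ℕ) * (k : ℕ) : ZMod 6) = (((j : ℕ) * (k : ℕ) : ℕ) : ZMod 6) := by push_cast; ring
  have h7 : ((a : ℕ) * 3 ^ (k : ℕ) : ZMod 7) = (((a : ℕ) * 3 ^ (k : ℕ) : ℕ) : ZMod 7) := by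
    push_cast; ring
  rw [h6, h7, stdAddChar_natCast, stdAddChar_natCast]
  simp only [dim6Basis, if_neg ha, WithLp.equiv_symm_apply, PiLp.toLp_apply]
  push_cast
  ring_nf

lemma norm_dim6Basis_apply_sq {a : Fin 8} (ha : a ≠ 0) (j k : Fin 6) :
    ‖dim6Basis a j k‖ ^ 2 = 6⁻¹ := by
  rw [dim6Basis_apply ha, norm_mul, norm_mul, AddChar.norm_apply, AddChar.norm_apply, norm_inv,
    norm_real, Real.norm_of_nonneg (Real.sqrt_nonneg _)]
  simp

lemma inner_dim6Basis {a b : Fin 8} (ha : a ≠ 0) (hb : b ≠ 0) (j k : Fin 6) :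
    inner ℂ (dim6Basis a j) (dim6Basis b k) =
      6⁻¹ * twistedSum ((k : ℕ) - (j : ℕ)) ((b : ℕ) - (a : ℕ)) := by
  simp only [PiLp.inner_apply, RCLike.inner_apply, twistedSum, Finset.mul_sum]
  refine Finset.sum_congr rfl fun l _ => ?_
  rw [dim6Basis_apply ha, dim6Basis_apply hb, map_mul (starRingEnd ℂ), map_mul (starRingEnd ℂ),
    map_inv₀, conj_ofReal, ← AddChar.map_neg_eq_conj, ← AddChar.map_neg_eq_conj]
  have hsq : ((Real.sqrt 6 : ℝ) : ℂ)⁻¹ * ((Real.sqrt 6 : ℝ) : ℂ)⁻¹ = 6⁻¹ := by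
    rw [← mul_inv, ← ofReal_mul, Real.mul_self_sqrt (by norm_num)]
    norm_num
  have h6 : ψ₆ (-((j : ℕ) * (l : ℕ))) * ψ₆ ((k : ℕ) * (l : ℕ)) =
      ψ₆ (((k : ℕ) - (j : ℕ)) * (l : ℕ)) := by
    rw [← AddChar.map_add_eq_mul]; ring_nf
  have h7 : ψ₇ (-((a : ℕ) * 3 ^ (l : ℕ))) * ψ₇ ((b : ℕ) * 3 ^ (l : ℕ)) =
      ψ₇ (((b : ℕ) - (a : ℕ)) * 3 ^ (l : ℕ)) := by
    rw [← AddChar.map_add_eq_mul]; ring_nf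
  rw [← hsq, ← h6, ← h7]
  ring

lemma dim6Basis_orthonormal (a : Fin 8) : Orthonormal ℂ (dim6Basis a) := by
  rcases eq_or_ne a 0 with rfl | ha
  · rw [show dim6Basis 0 = _ from funext dim6Basis_zero]
    exact EuclideanSpace.orthonormal_single
  rw [orthonormal_iff_ite]
  intro j k
  rw [inner_dim6Basis ha ha, sub_self, twistedSum_zero_right]
  simp only [natCast_sub_natCast_eq_zero_iff_fin_six]
  split_ifs <;> norm_num

lemma norm_inner_dim6Basis_zero_left_sq {b : Fin 8} (hb : b ≠ 0) (j k : Fin 6) :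
    ‖inner ℂ (dim6Basis 0 j) (dim6Basis b k)‖ ^ 2 = 6⁻¹ := by
  rw [dim6Basis_zero, EuclideanSpace.inner_single_left, map_one, one_mul,
    norm_dim6Basis_apply_sq hb]

lemma norm_inner_dim6Basis_sq {a b : Fin 8} (ha : a ≠ 0) (hb : b ≠ 0) (hab : a ≠ b)
    (j k : Fin 6) :
    ‖inner ℂ (dim6Basis a j) (dim6Basis b k)‖ ^ 2 = if j = k then 36⁻¹ else 7 / 36 := by
  have hc : ((b : ℕ) - (a : ℕ) : ZMod 7) ≠ 0 :=
    (natCast_sub_natCast_eq_zero_iff_fin_eight ha hb).not.2 hab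
  rw [inner_dim6Basis ha hb, norm_mul, mul_pow]
  split_ifs with hjk
  · rw [(natCast_sub_natCast_eq_zero_iff_fin_six j k).2 hjk, twistedSum_zero_left hc]
    norm_num
  · rw [norm_twistedSum_sq ((natCast_sub_natCast_eq_zero_iff_fin_six j k).not.2 hjk) hc]
    norm_num

lemma sum_norm_inner_dim6Basis_pow_four (a b : Fin 8) :
    ∑ j, ∑ k, ‖inner ℂ (dim6Basis a j) (dim6Basis b k)‖ ^ 4 =
      if a = b then 6 else if a = 0 ∨ b = 0 then 1 else 41 / 36 := by
  have hcard : (Fintype.card (Fin 6) : ℝ) = 6 := by simp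
  by_cases hab : a = b
  · subst hab
    rw [sum_sum_pow_four_of_sq_eq_ite _ _ _
      (norm_inner_sq_of_orthonormal (dim6Basis_orthonormal a)), hcard]
    norm_num
  rcases eq_or_ne a 0 with rfl | ha
  · rw [sum_sum_pow_four_of_sq_eq_ite _ 6⁻¹ 6⁻¹
      (fun j k => by rw [ite_self, norm_inner_dim6Basis_zero_left_sq (Ne.symm hab)]), hcard]
    norm_num [hab]
  rcases eq_or_ne b 0 with rfl | hb
  · rw [sum_sum_pow_four_of_sq_eq_ite _ 6⁻¹ 6⁻¹
      (fun j k => by rw [ite_self, norm_inner_symm, norm_inner_dim6Basis_zero_left_sq ha]), hcard]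
    norm_num [hab]
  rw [sum_sum_pow_four_of_sq_eq_ite _ _ _ (norm_inner_dim6Basis_sq ha hb hab), hcard]
  norm_num [hab, ha, hb]

/-- **A weighted 2-design in `ℂ⁶` from 8 orthonormal bases.** (i) Each of the 8 families
`dim6Basis a` is an orthonormal basis of `ℂ⁶`; (ii) with weights `1/42` and `1/49` their
union forms a weighted 2-design: the Welch sum equals `1/21 = 2/(6·7)`. -/
theorem dim6_weighted_two_design :
    (∀ a : Fin 8, Orthonormal ℂ (dim6Basis a)) ∧
    ∑ a : Fin 8, ∑ b : Fin 8, dim6Weight a * dim6Weight b *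
        ∑ j : Fin 6, ∑ k : Fin 6, ‖(inner ℂ (dim6Basis a j) (dim6Basis b k) : ℂ)‖ ^ 4 =
      1 / 21 := by
  refine ⟨dim6Basis_orthonormal, ?_⟩
  simp only [sum_norm_inner_dim6Basis_pow_four, dim6Weight, Fin.sum_univ_eight, Fin.reduceEq,
    reduceIte, or_false, false_or]
  norm_num
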